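/- For a classical-quantum state ρ_XB = |0⟩⟨0| ⊗ σ₀ + |1⟩⟨1| ⊗ σ₁ with binary classical register X, the conditional max-entropy satisfies H_max(X|B) = log(1 + 2 F(σ₀, σ₁)). -/

import Mathlib

open ComplexOrder

/-- The square root of a positive semidefinite matrix, as defined in Mathlib of December 2024. -/
noncomputable def Matrix.PosSemidef.sqrt {n 𝕜 : Type*} [Fintype n] [RCLike 𝕜] [DecidableEq n]
    {A : Matrix n n 𝕜} (hA : Matrix.PosSemidef A) : Matrix n n 𝕜 :=
  hA.1.eigenvectorUnitary.1 * Matrix.diagonal ((↑) ∘ (√·) ∘ hA.1.eigenvalues) *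
  (star hA.1.eigenvectorUnitary : Matrix n n 𝕜)

/-- Trace norm ‖A‖₁ = Tr √(AᴴA). -/
noncomputable def traceNorm {n : Type*} [Fintype n] [DecidableEq n]
    (A : Matrix n n ℂ) : ℝ :=
  ((Matrix.posSemidef_conjTranspose_mul_self A).sqrt.trace).re

/-! Write `S₀ = √σ₀`, `S₁ = √σ₁` and use `‖X‖₁ = max_U Re Tr(U X)` over unitaries `U`, the maximum
being attained at the adjoint of the polar factor of `X`.

Upper bound: for a state `ρ` pick unitaries `Uᵢ` with `Tr(Uᵢ Sᵢ √ρ) = F(σᵢ, ρ)`. The sum of the two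
fidelities is `Re Tr(N √ρ)` with `N = U₀ S₀ + U₁ S₁`, and Cauchy–Schwarz for the Hilbert–Schmidt
inner product bounds it by `√(Tr N Nᴴ) = √(1 + 2 Re Tr(U₁ᴴ U₀ S₀ S₁)) ≤ √(1 + 2 F(σ₀, σ₁))`.

Lower bound: pick a unitary `U` with `Tr(U S₀ S₁) = F(σ₀, σ₁)`, put `M = S₀ + Uᴴ S₁`, so that
`Tr M Mᴴ = 1 + 2 F(σ₀, σ₁) =: c`, and take `ρ = Mᴴ M / c`. Since `‖A √(Mᴴ M)‖₁ = ‖A Mᴴ‖₁`,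
`F(σ₀, ρ) + F(σ₁, ρ) ≥ Re Tr((S₀ + Uᴴ S₁) Mᴴ) / √c = √c`.
-/

namespace Matrix.PosSemidef

open scoped MatrixOrder

variable {n 𝕜 : Type*} [Fintype n] [RCLike 𝕜] [DecidableEq n] {A : Matrix n n 𝕜}

lemma sqrt_eq_cfcSqrt (hA : A.PosSemidef) : hA.sqrt = CFC.sqrt A := by
  rw [CFC.sqrt_eq_cfc, cfc_nnreal_eq_real _ A hA.nonneg, hA.1.cfc_eq, IsHermitian.cfc,
    Unitary.conjStarAlgAut_apply]
  unfold PosSemidef.sqrt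
  congr 3
  funext i
  simp [Real.coe_sqrt, Real.coe_toNNReal', max_eq_left (hA.eigenvalues_nonneg i)]

lemma posSemidef_sqrt (hA : A.PosSemidef) : hA.sqrt.PosSemidef := by
  rw [sqrt_eq_cfcSqrt]
  exact nonneg_iff_posSemidef.mp (CFC.sqrt_nonneg A)

lemma sqrt_mul_self (hA : A.PosSemidef) : hA.sqrt * hA.sqrt = A := by
  rw [sqrt_eq_cfcSqrt]
  exact CFC.sqrt_mul_sqrt_self A hA.nonneg

lemma sqrt_eq_of_mul_self_eq (hA : A.PosSemidef) {B : Matrix n n 𝕜} (hB : B.PosSemidef)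
    (hBA : B * B = A) : hA.sqrt = B := by
  rw [sqrt_eq_cfcSqrt]
  exact CFC.sqrt_unique hBA hB.nonneg

end Matrix.PosSemidef

lemma Matrix.PosSemidef.ofReal_re_trace {n : Type*} [Fintype n] {A : Matrix n n ℂ}
    (hA : A.PosSemidef) : (A.trace.re : ℂ) = A.trace :=
  (Complex.eq_re_of_ofReal_le (r := 0) (by simpa using hA.trace_nonneg)).symm

open Matrix

section

variable {n : Type*} [Fintype n] [DecidableEq n]

/- The columns of `Y` are orthogonal with squared norms `d`: normalise the nonzero ones and extend
them to an orthonormal basis. -/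
lemma exists_unitary_mul_diagonal_sqrt {Y : Matrix n n ℂ} {d : n → ℝ} (hd : 0 ≤ d)
    (hY : Yᴴ * Y = diagonal fun i ↦ (d i : ℂ)) :
    ∃ W ∈ unitaryGroup n ℂ, Y = W * diagonal fun i ↦ (√(d i) : ℂ) := by
  let y : n → EuclideanSpace ℂ n := fun i ↦ WithLp.toLp 2 (Y · i)
  have inner_y (i j : n) : inner ℂ (y i) (y j) = if i = j then (d i : ℂ) else 0 := by
    have : inner ℂ (y i) (y j) = (Yᴴ * Y) i j := by
      simp [y, PiLp.inner_apply, Matrix.mul_apply, mul_comm]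
    rw [this, hY, diagonal_apply]
  have sqrt_ne_zero {i : n} (hi : d i ≠ 0) : (√(d i) : ℂ) ≠ 0 := by
    simpa [Real.sqrt_eq_zero (hd i)] using hi
  let s : Set n := {i | d i ≠ 0}
  let u : n → EuclideanSpace ℂ n := fun i ↦ ((√(d i))⁻¹ : ℂ) • y i
  have hu : Orthonormal ℂ (s.domRestrict u) := by
    rw [orthonormal_iff_ite]
    rintro ⟨i, hi⟩ ⟨j, -⟩
    simp only [Set.domRestrict_apply, u, inner_smul_left, inner_smul_right, inner_y,
      Subtype.mk.injEq]
    split_ifs with hij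
    · subst hij
      have hsq : (√(d i) : ℂ) * √(d i) = d i := by exact_mod_cast Real.mul_self_sqrt (hd i)
      have := sqrt_ne_zero hi
      rw [map_inv₀, Complex.conj_ofReal, ← hsq]
      field_simp
    · simp
  obtain ⟨b, hb⟩ := hu.exists_orthonormalBasis_extension_of_card_eq (by simp)
  refine ⟨(EuclideanSpace.basisFun n ℂ).toBasis.toMatrix b.toBasis,
    (EuclideanSpace.basisFun n ℂ).toMatrix_orthonormalBasis_mem_unitary b, ?_⟩
  ext k i
  rw [mul_diagonal, Module.Basis.toMatrix_apply]
  by_cases hi : d i = 0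
  · have : y i = 0 := by rw [← inner_self_eq_zero (𝕜 := ℂ), inner_y, if_pos rfl, hi]; simp
    simpa [hi] using congr($this k)
  · have := sqrt_ne_zero hi
    simp [hb i hi, u, y]
    field_simp

lemma exists_unitary_mul_sqrt (X : Matrix n n ℂ) :
    ∃ U ∈ unitaryGroup n ℂ, X = U * (posSemidef_conjTranspose_mul_self X).sqrt := by
  set hX := posSemidef_conjTranspose_mul_self X
  set V : Matrix n n ℂ := hX.1.eigenvectorUnitary.1
  have hV : V ∈ unitaryGroup n ℂ := hX.1.eigenvectorUnitary.2
  have hdiag : (X * V)ᴴ * (X * V) = diagonal fun i ↦ (hX.1.eigenvalues i : ℂ) := by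
    have := hX.1.conjStarAlgAut_star_eigenvectorUnitary
    rw [Unitary.conjStarAlgAut_star_apply] at this
    rw [conjTranspose_mul, ← star_eq_conjTranspose]
    convert this using 1
    · simp only [V, Matrix.mul_assoc]
    · rfl
  obtain ⟨W, hW, hXV⟩ := exists_unitary_mul_diagonal_sqrt hX.eigenvalues_nonneg hdiag
  refine ⟨W * star V, Submonoid.mul_mem _ hW (Unitary.star_mem hV), ?_⟩
  calc X = X * V * star V := by rw [Matrix.mul_assoc, mem_unitaryGroup_iff.mp hV, Matrix.mul_one]
    _ = W * star V * hX.sqrt := by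
      rw [hXV, PosSemidef.sqrt]
      simp only [Matrix.mul_assoc]
      rw [← Matrix.mul_assoc (star V) V, mem_unitaryGroup_iff'.mp hV, Matrix.one_mul]
      rfl

-- Cauchy–Schwarz for the Hilbert–Schmidt inner product `⟪A, B⟫ = Tr (B * Aᴴ)`.
lemma re_trace_mul_conjTranspose_le (A B : Matrix n n ℂ) :
    (B * Aᴴ).trace.re ≤ √(A * Aᴴ).trace.re * √(B * Bᴴ).trace.re := by
  let _ := toMatrixSeminormedAddCommGroup (1 : Matrix n n ℂ) PosSemidef.one
  let _ := toMatrixInnerProductSpace (1 : Matrix n n ℂ) PosSemidef.one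
  have inner_eq (A B : Matrix n n ℂ) : inner ℂ A B = (B * Aᴴ).trace := by
    change (B * 1 * Aᴴ).trace = _
    rw [Matrix.mul_one]
  have norm_eq (A : Matrix n n ℂ) : ‖A‖ = √(A * Aᴴ).trace.re := by
    rw [norm_eq_sqrt_re_inner (𝕜 := ℂ), inner_eq]
    rfl
  have := re_inner_le_norm (𝕜 := ℂ) A B
  rwa [inner_eq, norm_eq, norm_eq] at this

lemma traceNorm_nonneg (X : Matrix n n ℂ) : 0 ≤ traceNorm X :=
  (Complex.nonneg_iff.mp (posSemidef_conjTranspose_mul_self X).posSemidef_sqrt.trace_nonneg).1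

lemma traceNorm_congr {X Y : Matrix n n ℂ} (h : Xᴴ * X = Yᴴ * Y) : traceNorm X = traceNorm Y := by
  simp only [traceNorm, PosSemidef.sqrt_eq_cfcSqrt, h]

lemma traceNorm_conjTranspose (X : Matrix n n ℂ) : traceNorm Xᴴ = traceNorm X := by
  obtain ⟨U, hU, hX⟩ := exists_unitary_mul_sqrt X
  set hP := (posSemidef_conjTranspose_mul_self X).posSemidef_sqrt
  set P := (posSemidef_conjTranspose_mul_self X).sqrt
  have hsq : (U * P * Uᴴ) * (U * P * Uᴴ) = Xᴴᴴ * Xᴴ := by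
    conv_rhs => rw [conjTranspose_conjTranspose, hX, conjTranspose_mul, hP.1.eq]
    simp only [Matrix.mul_assoc]
    rw [← Matrix.mul_assoc Uᴴ U, ← star_eq_conjTranspose, mem_unitaryGroup_iff'.mp hU,
      Matrix.one_mul]
  rw [traceNorm, PosSemidef.sqrt_eq_of_mul_self_eq _ (hP.mul_mul_conjTranspose_same U) hsq,
    trace_mul_cycle, ← star_eq_conjTranspose, mem_unitaryGroup_iff'.mp hU, Matrix.one_mul]
  rfl

lemma trace_unitary_mul_mul_conjTranspose {U : Matrix n n ℂ} (hU : U ∈ unitaryGroup n ℂ)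
    (X : Matrix n n ℂ) : (U * X * (U * X)ᴴ).trace = (X * Xᴴ).trace := by
  have hU' : Uᴴ * U = 1 := mem_unitaryGroup_iff'.mp hU
  rw [conjTranspose_mul, Matrix.mul_assoc, trace_mul_comm, Matrix.mul_assoc, Matrix.mul_assoc, hU',
    Matrix.mul_one]

lemma re_trace_unitary_mul_le_traceNorm {U : Matrix n n ℂ} (hU : U ∈ unitaryGroup n ℂ)
    (X : Matrix n n ℂ) : (U * X).trace.re ≤ traceNorm X := by
  obtain ⟨W, hW, hX⟩ := exists_unitary_mul_sqrt X
  set hP := (posSemidef_conjTranspose_mul_self X).posSemidef_sqrt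
  set Q := hP.sqrt
  have hQ : Qᴴ = Q := hP.posSemidef_sqrt.1.eq
  have hUW : U * W ∈ unitaryGroup n ℂ := Submonoid.mul_mem _ hU hW
  have hUX : U * X = U * W * Q * Qᴴ := by
    rw [hQ, Matrix.mul_assoc (U * W), hP.sqrt_mul_self, Matrix.mul_assoc]
    conv_lhs => rw [hX]
  have htr : (Q * Qᴴ).trace.re = traceNorm X := by rw [hQ, hP.sqrt_mul_self]; rfl
  have := re_trace_mul_conjTranspose_le Q (U * W * Q)
  rw [← hUX, trace_unitary_mul_mul_conjTranspose hUW, htr] at this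
  rwa [Real.mul_self_sqrt (traceNorm_nonneg X)] at this

lemma exists_unitary_trace_mul_eq_traceNorm (X : Matrix n n ℂ) :
    ∃ U ∈ unitaryGroup n ℂ, (U * X).trace = traceNorm X := by
  obtain ⟨W, hW, hX⟩ := exists_unitary_mul_sqrt X
  refine ⟨star W, Unitary.star_mem hW, ?_⟩
  conv_lhs => rw [hX, ← Matrix.mul_assoc, mem_unitaryGroup_iff'.mp hW, Matrix.one_mul]
  exact (posSemidef_conjTranspose_mul_self X).posSemidef_sqrt.ofReal_re_trace.symm

lemma traceNorm_mul_sqrt_conjTranspose_mul_self (A M : Matrix n n ℂ) :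
    traceNorm (A * (posSemidef_conjTranspose_mul_self M).sqrt) = traceNorm (A * Mᴴ) := by
  set hM := posSemidef_conjTranspose_mul_self M
  rw [← traceNorm_conjTranspose, ← traceNorm_conjTranspose (A * Mᴴ)]
  apply traceNorm_congr
  simp only [conjTranspose_mul, conjTranspose_conjTranspose, hM.posSemidef_sqrt.1.eq]
  simp only [Matrix.mul_assoc]
  rw [← Matrix.mul_assoc hM.sqrt, hM.sqrt_mul_self, Matrix.mul_assoc]

lemma re_trace_add_mul_conjTranspose_add (A B : Matrix n n ℂ) :
    ((A + B) * (A + B)ᴴ).trace.re =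
      (A * Aᴴ).trace.re + (B * Bᴴ).trace.re + 2 * (A * Bᴴ).trace.re := by
  have hBA : (B * Aᴴ).trace = star (A * Bᴴ).trace := by
    rw [← trace_conjTranspose, conjTranspose_mul, conjTranspose_conjTranspose]
  simp only [conjTranspose_add, add_mul, mul_add, trace_add, Complex.add_re, hBA,
    Complex.star_def, Complex.conj_re]
  ring

lemma re_trace_mul_conjTranspose_le_traceNorm_add {S₀ S₁ U : Matrix n n ℂ}
    (hU : U ∈ unitaryGroup n ℂ) (M : Matrix n n ℂ) :
    ((S₀ + U * S₁) * Mᴴ).trace.re ≤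
      traceNorm (S₀ * (posSemidef_conjTranspose_mul_self M).sqrt) +
        traceNorm (S₁ * (posSemidef_conjTranspose_mul_self M).sqrt) := by
  rw [traceNorm_mul_sqrt_conjTranspose_mul_self, traceNorm_mul_sqrt_conjTranspose_mul_self,
    add_mul, trace_add, Complex.add_re, Matrix.mul_assoc]
  gcongr
  · simpa using re_trace_unitary_mul_le_traceNorm (one_mem _) (S₀ * Mᴴ)
  · exact re_trace_unitary_mul_le_traceNorm hU _

theorem traceNorm_sqrt_mul_sqrt_add_le {σ₀ σ₁ ρ : Matrix n n ℂ} (h₀ : σ₀.PosSemidef)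
    (h₁ : σ₁.PosSemidef) (hρ : ρ.PosSemidef) :
    traceNorm (h₀.sqrt * hρ.sqrt) + traceNorm (h₁.sqrt * hρ.sqrt) ≤
      √((σ₀.trace + σ₁.trace).re + 2 * traceNorm (h₀.sqrt * h₁.sqrt)) * √ρ.trace.re := by
  set S₀ := h₀.sqrt
  set S₁ := h₁.sqrt
  set R := hρ.sqrt
  have hS₀ : S₀ᴴ = S₀ := h₀.posSemidef_sqrt.1.eq
  have hS₁ : S₁ᴴ = S₁ := h₁.posSemidef_sqrt.1.eq
  have hR : Rᴴ = R := hρ.posSemidef_sqrt.1.eq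
  obtain ⟨U₀, hU₀, e₀⟩ := exists_unitary_trace_mul_eq_traceNorm (S₀ * R)
  obtain ⟨U₁, hU₁, e₁⟩ := exists_unitary_trace_mul_eq_traceNorm (S₁ * R)
  set N := U₀ * S₀ + U₁ * S₁
  have hsum : traceNorm (S₀ * R) + traceNorm (S₁ * R) = (N * Rᴴ).trace.re := by
    rw [hR, add_mul, trace_add, Matrix.mul_assoc, Matrix.mul_assoc, e₀, e₁, Complex.add_re,
      Complex.ofReal_re, Complex.ofReal_re]
  have hcross : (U₀ * S₀ * (U₁ * S₁)ᴴ).trace.re ≤ traceNorm (S₀ * S₁) := by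
    have : (U₀ * S₀ * (U₁ * S₁)ᴴ).trace = (U₁ᴴ * U₀ * (S₀ * S₁)).trace := by
      rw [conjTranspose_mul, hS₁, ← Matrix.mul_assoc, trace_mul_comm]
      simp only [Matrix.mul_assoc]
    rw [this]
    exact re_trace_unitary_mul_le_traceNorm (Submonoid.mul_mem _ (Unitary.star_mem hU₁) hU₀) _
  have hN : (N * Nᴴ).trace.re ≤ (σ₀.trace + σ₁.trace).re + 2 * traceNorm (S₀ * S₁) := by
    rw [re_trace_add_mul_conjTranspose_add, trace_unitary_mul_mul_conjTranspose hU₀,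
      trace_unitary_mul_mul_conjTranspose hU₁, hS₀, hS₁, h₀.sqrt_mul_self, h₁.sqrt_mul_self,
      Complex.add_re]
    linarith
  calc traceNorm (S₀ * R) + traceNorm (S₁ * R)
      = (N * Rᴴ).trace.re := hsum
    _ ≤ √(R * Rᴴ).trace.re * √(N * Nᴴ).trace.re := re_trace_mul_conjTranspose_le R N
    _ ≤ _ := by
      rw [hR, hρ.sqrt_mul_self, mul_comm]
      gcongr

theorem exists_le_traceNorm_sqrt_mul_sqrt_add {σ₀ σ₁ : Matrix n n ℂ} (h₀ : σ₀.PosSemidef)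
    (h₁ : σ₁.PosSemidef) (htr : σ₀.trace + σ₁.trace = 1) :
    ∃ ρ : Matrix n n ℂ, ∃ hρ : ρ.PosSemidef, ρ.trace = 1 ∧
      √(1 + 2 * traceNorm (h₀.sqrt * h₁.sqrt)) ≤
        traceNorm (h₀.sqrt * hρ.sqrt) + traceNorm (h₁.sqrt * hρ.sqrt) := by
  set S₀ := h₀.sqrt
  set S₁ := h₁.sqrt
  have hS₀ : S₀ᴴ = S₀ := h₀.posSemidef_sqrt.1.eq
  have hS₁ : S₁ᴴ = S₁ := h₁.posSemidef_sqrt.1.eq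
  obtain ⟨U, hU, hUF⟩ := exists_unitary_trace_mul_eq_traceNorm (S₀ * S₁)
  have hU' : Uᴴ ∈ unitaryGroup n ℂ := Unitary.star_mem hU
  set c := 1 + 2 * traceNorm (S₀ * S₁)
  have hc : 0 < c := by have := traceNorm_nonneg (S₀ * S₁); positivity
  set M := S₀ + Uᴴ * S₁
  have hMM : (M * Mᴴ).trace = c := by
    have hcross : (S₀ * (Uᴴ * S₁)ᴴ).trace = traceNorm (S₀ * S₁) := by
      rw [conjTranspose_mul, hS₁, conjTranspose_conjTranspose, ← Matrix.mul_assoc, trace_mul_comm,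
        hUF]
    rw [← (posSemidef_self_mul_conjTranspose M).ofReal_re_trace,
      re_trace_add_mul_conjTranspose_add, trace_unitary_mul_mul_conjTranspose hU', hS₀, hS₁,
      h₀.sqrt_mul_self, h₁.sqrt_mul_self, hcross, ← Complex.add_re, htr]
    simp [c]
  set M' := (√c)⁻¹ • M
  refine ⟨M'ᴴ * M', posSemidef_conjTranspose_mul_self M', ?_, ?_⟩
  · rw [trace_mul_comm]
    simp only [M', conjTranspose_smul, Matrix.smul_mul, Matrix.mul_smul, trace_smul, hMM,
      star_trivial, smul_smul, ← mul_inv, Real.mul_self_sqrt hc.le, Complex.real_smul,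
      Complex.ofReal_inv]
    exact inv_mul_cancel₀ (Complex.ofReal_ne_zero.mpr hc.ne')
  · refine le_of_eq_of_le ?_ (re_trace_mul_conjTranspose_le_traceNorm_add hU' M')
    simp only [M', conjTranspose_smul, Matrix.mul_smul, trace_smul, star_trivial,
      Complex.smul_re, smul_eq_mul]
    rw [hMM, Complex.ofReal_re, eq_inv_mul_iff_mul_eq₀ (Real.sqrt_pos.mpr hc).ne',
      Real.mul_self_sqrt hc.le]

end

/-- For a cq state with binary register, H_max(X|B) = log₂(1 + 2 F(σ₀,σ₁)),
where H_max(X|B) = 2 log₂ max_ρ (F(σ₀,ρ) + F(σ₁,ρ)). -/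
theorem hmax_cq_binary
    {n : Type*} [Fintype n] [DecidableEq n]
    (σ₀ σ₁ : Matrix n n ℂ) (h₀ : σ₀.PosSemidef) (h₁ : σ₁.PosSemidef)
    (htr : σ₀.trace + σ₁.trace = 1) (m : ℝ)
    (hm : IsGreatest
      {x : ℝ | ∃ ρ : Matrix n n ℂ, ∃ hρ : ρ.PosSemidef, ρ.trace = 1 ∧
        x = traceNorm (h₀.sqrt * hρ.sqrt) + traceNorm (h₁.sqrt * hρ.sqrt)} m) :
    2 * Real.logb 2 m = Real.logb 2 (1 + 2 * traceNorm (h₀.sqrt * h₁.sqrt)) := by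
  set c := 1 + 2 * traceNorm (h₀.sqrt * h₁.sqrt)
  have hm_le : m ≤ √c := by
    obtain ⟨ρ, hρ, hρtr, rfl⟩ := hm.1
    simpa [htr, hρtr] using traceNorm_sqrt_mul_sqrt_add_le h₀ h₁ hρ
  have hm_ge : √c ≤ m := by
    obtain ⟨ρ, hρ, hρtr, hle⟩ := exists_le_traceNorm_sqrt_mul_sqrt_add h₀ h₁ htr
    exact hle.trans (hm.2 ⟨ρ, hρ, hρtr, rfl⟩)
  have hc : 0 ≤ c := by have := traceNorm_nonneg (h₀.sqrt * h₁.sqrt); positivity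
  rw [le_antisymm hm_le hm_ge, ← Nat.cast_ofNat, ← Real.logb_pow, Real.sq_sqrt hc]
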